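/- Let d ≥ 1, K > 0, ρ > 0. Let ψ ∈ C²(ℝ^d) be nonnegative with |∂^α ψ(x)| ≤ K for all x and all multi-indices 1 ≤ |α| ≤ 2, and let V₀ ∈ C¹(ℝ^d) with |V₀(x)| ≤ K and |∇V₀(x)| ≤ K for all x. For λ > 0 set φ = e^{λψ} and define the symbols p_R(x,ξ) = |ξ|² − |∇φ(x)|² − V₀(x) and p_I(x,ξ) = 2ξ·∇φ(x) on ℝ^d×ℝ^d, with Poisson bracket {p_R,p_I} = ∂_ξ p_R·∂_x p_I − ∂_x p_R·∂_ξ p_I. Then there exist λ₀ ≥ 1 and C > 0, depending only on d, K, ρ, such that for all λ ≥ λ₀ and all (x,ξ) with |∇ψ(x)| ≥ ρ and (1/4)(|∇φ(x)|² + V₀(x)) ≤ |ξ|² ≤ 4(|∇φ(x)|² + V₀(x)): {p_R,p_I}(x,ξ) ≥ C λ³ e^{3λψ(x)} > 0. -/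

import Mathlib

/-!
For any `φ ∈ C²` the bracket of `|ξ|² - |∇φ|² - V₀` and `2 ξ·∇φ` is
`4 ∇²φ(ξ,ξ) + 4 ∇²φ(∇φ,∇φ) + 2 ∇V₀·∇φ`. For `φ = e^{λψ}` we have `∇φ = λφ ∇ψ` and
`∇²φ = λφ (λ ∇ψ ⊗ ∇ψ + ∇²ψ)`, so with `t = λφ ≥ 1` the bracket equals
`4t (λ (ξ·∇ψ)² + ∇²ψ(ξ,ξ)) + 4t³ (λ |∇ψ|⁴ + ∇²ψ(∇ψ,∇ψ)) + 2t ∇V₀·∇ψ`.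
On the region `|ξ|² ≤ 4(|∇φ|² + V₀)` we have `|ξ|² = O(t²)`, so every term other than the
nonnegative `4λt (ξ·∇ψ)²` and the leading `4λt³|∇ψ|⁴ ≥ 4λρ⁴t³` is `O((K³ + K²) t³)`, and the
leading term wins once `λ ≳ (K³ + K²)/ρ⁴`.
-/

open Real RealInnerProductSpace

/-- The exponential Carleman weight `φ = e^{λψ}`. -/
noncomputable def carlemanPhi {d : ℕ} (lam : ℝ)
    (ψ : EuclideanSpace ℝ (Fin d) → ℝ) : EuclideanSpace ℝ (Fin d) → ℝ :=
  fun x => Real.exp (lam * ψ x)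

/-- The real part `p_R(x,ξ) = |ξ|² − |∇φ(x)|² − V₀(x)` of the conjugated symbol. -/
noncomputable def pRsymb {d : ℕ} (lam : ℝ)
    (ψ V₀ : EuclideanSpace ℝ (Fin d) → ℝ)
    (x ξ : EuclideanSpace ℝ (Fin d)) : ℝ :=
  ‖ξ‖ ^ 2 - ‖gradient (carlemanPhi lam ψ) x‖ ^ 2 - V₀ x

/-- The imaginary part `p_I(x,ξ) = 2 ξ·∇φ(x)` of the conjugated symbol. -/
noncomputable def pIsymb {d : ℕ} (lam : ℝ)
    (ψ : EuclideanSpace ℝ (Fin d) → ℝ)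
    (x ξ : EuclideanSpace ℝ (Fin d)) : ℝ :=
  2 * ⟪ξ, gradient (carlemanPhi lam ψ) x⟫

/-- Poisson bracket `{f,g} = ∂_ξ f·∂_x g − ∂_x f·∂_ξ g` of two symbols on
`ℝ^d × ℝ^d`. -/
noncomputable def poissonBracket {d : ℕ}
    (f g : EuclideanSpace ℝ (Fin d) → EuclideanSpace ℝ (Fin d) → ℝ)
    (x ξ : EuclideanSpace ℝ (Fin d)) : ℝ :=
  ⟪gradient (fun ξ' => f x ξ') ξ, gradient (fun x' => g x' ξ) x⟫
    - ⟪gradient (fun x' => f x' ξ) x, gradient (fun ξ' => g x ξ') ξ⟫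

open InnerProductSpace

theorem norm_gradient {𝕜 F : Type*} [RCLike 𝕜] [NormedAddCommGroup F] [InnerProductSpace 𝕜 F]
    [CompleteSpace F] (f : F → 𝕜) (x : F) : ‖gradient f x‖ = ‖fderiv 𝕜 f x‖ :=
  (toDual 𝕜 F).symm.norm_map _

section ExpWeight

variable {F : Type*} [NormedAddCommGroup F] [NormedSpace ℝ F] {ψ : F → ℝ} {lam : ℝ}

theorem fderiv_exp_const_mul (hψ : Differentiable ℝ ψ) (y : F) :
    fderiv ℝ (fun y => exp (lam * ψ y)) y = (lam * exp (lam * ψ y)) • fderiv ℝ ψ y := by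
  rw [(((hψ y).hasFDerivAt.const_mul lam).exp).fderiv, smul_smul, mul_comm (exp _)]

theorem fderiv_fderiv_exp_const_mul_apply (hψ : ContDiff ℝ 2 ψ) (x v w : F) :
    fderiv ℝ (fderiv ℝ fun y => exp (lam * ψ y)) x v w
      = lam * exp (lam * ψ x)
          * (lam * fderiv ℝ ψ x v * fderiv ℝ ψ x w + fderiv ℝ (fderiv ℝ ψ) x v w) := by
  have hψ1 : Differentiable ℝ ψ := hψ.differentiable two_ne_zero
  have hψ2 : DifferentiableAt ℝ (fderiv ℝ ψ) x :=
    (hψ.fderiv_right (m := 1) le_rfl).differentiable one_ne_zero x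
  have hcoef := (((hψ1 x).hasFDerivAt.const_mul lam).exp).const_mul lam
  rw [funext (fderiv_exp_const_mul hψ1), (hcoef.fun_smul hψ2.hasFDerivAt).fderiv]
  simp only [add_apply, smul_apply, ContinuousLinearMap.smulRight_apply, smul_eq_mul]
  ring

end ExpWeight

section Hilbert

variable {F : Type*} [NormedAddCommGroup F] [InnerProductSpace ℝ F] [CompleteSpace F]
  {f : F → ℝ} {f'' : F →L[ℝ] StrongDual ℝ F} {x : F}

theorem real_inner_toDual_symm_right (v : F) (ℓ : StrongDual ℝ F) :
    ⟪v, (toDual ℝ F).symm ℓ⟫ = ℓ v := by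
  rw [real_inner_comm, toDual_symm_apply]

theorem HasFDerivAt.gradient_of_fderiv (h : HasFDerivAt (fderiv ℝ f) f'' x) :
    HasFDerivAt (gradient f)
      ((toDual ℝ F).symm.toContinuousLinearEquiv.toContinuousLinearMap ∘L f'') x :=
  (toDual ℝ F).symm.toContinuousLinearEquiv.toContinuousLinearMap.hasFDerivAt.comp x h

theorem HasFDerivAt.inner_gradient (h : HasFDerivAt (fderiv ℝ f) f'' x) (ξ : F) :
    HasFDerivAt (fun y => ⟪ξ, gradient f y⟫) (f''.flip ξ) x := by
  refine ((hasFDerivAt_const ξ x).inner ℝ h.gradient_of_fderiv).congr_fderiv ?_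
  ext v
  simp [real_inner_toDual_symm_right]

theorem HasFDerivAt.norm_sq_gradient (h : HasFDerivAt (fderiv ℝ f) f'' x) :
    HasFDerivAt (fun y => ‖gradient f y‖ ^ 2) (2 • f''.flip (gradient f x)) x := by
  refine h.gradient_of_fderiv.norm_sq.congr_fderiv ?_
  ext v
  simp [-inner_gradient_left, real_inner_toDual_symm_right]

theorem gradient_exp_const_mul {ψ : F → ℝ} {lam : ℝ} (hψ : Differentiable ℝ ψ) (y : F) :
    gradient (fun y => exp (lam * ψ y)) y = (lam * exp (lam * ψ y)) • gradient ψ y := by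
  simp [gradient, fderiv_exp_const_mul hψ]

end Hilbert

theorem four_mul_pow_le_carleman_expansion {K ρ lam t a g B₁ B₂ B₃ : ℝ} (hK : 0 ≤ K)
    (hρ : 0 < ρ) (hlam : 1 + 5 * K ^ 2 * (K + 1) / ρ ^ 4 ≤ lam) (ht : 1 ≤ t) (hρg : ρ ≤ g)
    (hB₁ : |B₁| ≤ 4 * K * (K ^ 2 + K) * t ^ 2) (hB₂ : |B₂| ≤ K ^ 3) (hB₃ : |B₃| ≤ K ^ 2) :
    4 * ρ ^ 4 * t ^ 3
      ≤ 4 * t * (lam * a ^ 2 + B₁) + 4 * t ^ 3 * (lam * g ^ 4 + B₂) + 2 * t * B₃ := by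
  have hlam' : ρ ^ 4 + 5 * K ^ 2 * (K + 1) ≤ lam * ρ ^ 4 := by
    have := mul_le_mul_of_nonneg_right hlam (by positivity : (0 : ℝ) ≤ ρ ^ 4)
    rwa [add_mul, one_mul, div_mul_cancel₀ _ (by positivity)] at this
  have hlam1 : 1 ≤ lam := (le_add_of_nonneg_right (by positivity)).trans hlam
  have ht0 : 0 ≤ t := zero_le_one.trans ht
  have hg : lam * ρ ^ 4 ≤ lam * g ^ 4 := by gcongr
  have hK2t : 2 * K ^ 2 * t ≤ 2 * K ^ 2 * t ^ 3 := by gcongr; exact le_self_pow₀ ht (by norm_num)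
  have ha : 0 ≤ 4 * t * (lam * a ^ 2) := by positivity
  have h₁ : -(4 * K * (K ^ 2 + K) * t ^ 2) ≤ B₁ := (neg_le_neg hB₁).trans (neg_abs_le B₁)
  have h₂ : -K ^ 3 ≤ B₂ := (neg_le_neg hB₂).trans (neg_abs_le B₂)
  have h₃ : -K ^ 2 ≤ B₃ := (neg_le_neg hB₃).trans (neg_abs_le B₃)
  have hKt : 0 ≤ K ^ 2 * t ^ 3 := by positivity
  -- the error terms add up to at least `-(20K³ + 18K²) t³`, which `hlam'` absorbs
  linarith [mul_le_mul_of_nonneg_left h₁ ht0, mul_le_mul_of_nonneg_left h₃ ht0,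
    mul_le_mul_of_nonneg_left h₂ (pow_nonneg ht0 3),
    mul_le_mul_of_nonneg_left hg (pow_nonneg ht0 3),
    mul_le_mul_of_nonneg_left hlam' (pow_nonneg ht0 3)]

section Symbols

variable {d : ℕ}

local notation "E" => EuclideanSpace ℝ (Fin d)

theorem poissonBracket_conjugated_symbol {φ V : E → ℝ} {x : E}
    (hφ : DifferentiableAt ℝ (fderiv ℝ φ) x) (hV : DifferentiableAt ℝ V x) (ξ : E) :
    poissonBracket (fun x ξ => ‖ξ‖ ^ 2 - ‖gradient φ x‖ ^ 2 - V x)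
        (fun x ξ => 2 * ⟪ξ, gradient φ x⟫) x ξ
      = 4 * fderiv ℝ (fderiv ℝ φ) x ξ ξ
        + 4 * fderiv ℝ (fderiv ℝ φ) x (gradient φ x) (gradient φ x)
        + 2 * fderiv ℝ V x (gradient φ x) := by
  have hR_ξ (w : E) :
      fderiv ℝ (fun ξ' : E => ‖ξ'‖ ^ 2 - ‖gradient φ x‖ ^ 2 - V x) ξ w = 2 * ⟪ξ, w⟫ := by
    rw [(((hasStrictFDerivAt_norm_sq ξ).hasFDerivAt.sub_const _).sub_const _).fderiv]
    simp
  have hI_ξ (w : E) :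
      fderiv ℝ (fun ξ' : E => 2 * ⟪ξ', gradient φ x⟫) ξ w = 2 * ⟪w, gradient φ x⟫ := by
    have h : HasFDerivAt (fun ξ' : E => 2 * ⟪ξ', gradient φ x⟫) _ ξ :=
      ((hasFDerivAt_id ξ).inner ℝ (hasFDerivAt_const (gradient φ x) ξ)).const_mul 2
    rw [h.fderiv]
    simp
  have hI_x :
      fderiv ℝ (fun x' => 2 * ⟪ξ, gradient φ x'⟫) x ξ = 2 * fderiv ℝ (fderiv ℝ φ) x ξ ξ := by
    rw [((hφ.hasFDerivAt.inner_gradient ξ).const_mul 2).fderiv]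
    simp
  have hR_x : fderiv ℝ (fun x' => ‖ξ‖ ^ 2 - ‖gradient φ x'‖ ^ 2 - V x') x (gradient φ x)
      = -(2 * fderiv ℝ (fderiv ℝ φ) x (gradient φ x) (gradient φ x))
        - fderiv ℝ V x (gradient φ x) := by
    rw [(hφ.hasFDerivAt.norm_sq_gradient.const_sub _).fun_sub hV.hasFDerivAt |>.fderiv]
    simp
  rw [poissonBracket, inner_gradient_left, hR_ξ, inner_gradient_right, conj_trivial, hI_x,
    real_inner_comm, inner_gradient_left, hI_ξ, inner_gradient_left, hR_x]
  ring

variable {lam : ℝ} {ψ V₀ : EuclideanSpace ℝ (Fin d) → ℝ} {x : EuclideanSpace ℝ (Fin d)}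

theorem gradient_carlemanPhi (hψ : Differentiable ℝ ψ) (x : E) :
    gradient (carlemanPhi lam ψ) x = (lam * exp (lam * ψ x)) • gradient ψ x :=
  gradient_exp_const_mul hψ x

theorem poissonBracket_pRsymb_pIsymb (hψ : ContDiff ℝ 2 ψ) (hV : DifferentiableAt ℝ V₀ x)
    (ξ : E) :
    poissonBracket (pRsymb lam ψ V₀) (pIsymb lam ψ) x ξ
      = 4 * (lam * exp (lam * ψ x))
          * (lam * fderiv ℝ ψ x ξ ^ 2 + fderiv ℝ (fderiv ℝ ψ) x ξ ξ)
        + 4 * (lam * exp (lam * ψ x)) ^ 3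
          * (lam * ‖gradient ψ x‖ ^ 4
            + fderiv ℝ (fderiv ℝ ψ) x (gradient ψ x) (gradient ψ x))
        + 2 * (lam * exp (lam * ψ x)) * fderiv ℝ V₀ x (gradient ψ x) := by
  have hφ : DifferentiableAt ℝ (fderiv ℝ (carlemanPhi lam ψ)) x :=
    ((contDiff_const.mul hψ).exp.fderiv_right (m := 1) le_rfl).differentiable one_ne_zero x
  have hHess (v w : E) : fderiv ℝ (fderiv ℝ (carlemanPhi lam ψ)) x v w
      = lam * exp (lam * ψ x)
          * (lam * fderiv ℝ ψ x v * fderiv ℝ ψ x w + fderiv ℝ (fderiv ℝ ψ) x v w) :=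
    fderiv_fderiv_exp_const_mul_apply hψ x v w
  have hDψ : fderiv ℝ ψ x (gradient ψ x) = ‖gradient ψ x‖ ^ 2 := by
    rw [← inner_gradient_left, real_inner_self_eq_norm_sq]
  refine (poissonBracket_conjugated_symbol hφ hV ξ).trans ?_
  rw [hHess, hHess, gradient_carlemanPhi (hψ.differentiable two_ne_zero)]
  simp only [map_smul, smul_eq_mul, FunLike.coe_smul, Pi.smul_apply, hDψ]
  ring

theorem four_mul_pow_le_poissonBracket_pRsymb_pIsymb {K ρ : ℝ} (hψ : ContDiff ℝ 2 ψ)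
    (hV : DifferentiableAt ℝ V₀ x) (hρ : 0 < ρ) (hlam : 1 + 5 * K ^ 2 * (K + 1) / ρ ^ 4 ≤ lam)
    (hψx : 0 ≤ ψ x) (hgψ : ‖gradient ψ x‖ ≤ K) (hρg : ρ ≤ ‖gradient ψ x‖)
    (hD2ψ : ‖fderiv ℝ (fderiv ℝ ψ) x‖ ≤ K) (hVx : V₀ x ≤ K) (hgV : ‖gradient V₀ x‖ ≤ K) {ξ : E}
    (hξ : ‖ξ‖ ^ 2 ≤ 4 * (‖gradient (carlemanPhi lam ψ) x‖ ^ 2 + V₀ x)) :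
    4 * ρ ^ 4 * (lam * exp (lam * ψ x)) ^ 3
      ≤ poissonBracket (pRsymb lam ψ V₀) (pIsymb lam ψ) x ξ := by
  have hK : 0 ≤ K := (norm_nonneg _).trans hgψ
  have hlam1 : 1 ≤ lam := (le_add_of_nonneg_right (by positivity)).trans hlam
  set t := lam * exp (lam * ψ x)
  have ht : 1 ≤ t := one_le_mul_of_one_le_of_one_le hlam1 (one_le_exp (by positivity))
  have hgψ2 : ‖gradient ψ x‖ ^ 2 ≤ K ^ 2 := pow_le_pow_left₀ (norm_nonneg _) hgψ 2
  have hξt : ‖ξ‖ ^ 2 ≤ 4 * (K ^ 2 + K) * t ^ 2 := by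
    rw [gradient_carlemanPhi (hψ.differentiable two_ne_zero), norm_smul,
      Real.norm_of_nonneg (by positivity)] at hξ
    nlinarith [one_le_pow₀ (n := 2) ht]
  have hHess (v : E) : |fderiv ℝ (fderiv ℝ ψ) x v v| ≤ K * ‖v‖ ^ 2 := by
    rw [← Real.norm_eq_abs, sq, ← mul_assoc]
    exact (ContinuousLinearMap.le_opNorm₂ _ v v).trans (by gcongr)
  have hDV : |fderiv ℝ V₀ x (gradient ψ x)| ≤ K ^ 2 := by
    rw [← inner_gradient_left, sq]
    exact (abs_real_inner_le_norm _ _).trans (mul_le_mul hgV hgψ (norm_nonneg _) hK)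
  rw [poissonBracket_pRsymb_pIsymb hψ hV]
  exact four_mul_pow_le_carleman_expansion hK hρ hlam ht hρg
    ((hHess ξ).trans ((mul_le_mul_of_nonneg_left hξt hK).trans_eq (by ring)))
    ((hHess _).trans ((mul_le_mul_of_nonneg_left hgψ2 hK).trans_eq (by ring))) hDV

end Symbols

theorem carleman_symbol_subellipticity_general
    (d : ℕ) (K ρ : ℝ) (hK : 0 < K) (hρ : 0 < ρ)
    (ψ V₀ : EuclideanSpace ℝ (Fin d) → ℝ)
    (hψ_smooth : ContDiff ℝ 2 ψ) (hψ_nonneg : ∀ x, 0 ≤ ψ x)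
    -- |∂^α ψ| ≤ K for all 1 ≤ |α| ≤ 2:
    (hψ_d1 : ∀ x, ‖iteratedFDeriv ℝ 1 ψ x‖ ≤ K)
    (hψ_d2 : ∀ x, ‖iteratedFDeriv ℝ 2 ψ x‖ ≤ K)
    (hV_smooth : ContDiff ℝ 1 V₀)
    (hV_bdd : ∀ x, |V₀ x| ≤ K) (hV_d1 : ∀ x, ‖gradient V₀ x‖ ≤ K) :
    ∃ lam₀ C : ℝ, 1 ≤ lam₀ ∧ 0 < C ∧
      ∀ lam : ℝ, lam₀ ≤ lam →
        ∀ x ξ : EuclideanSpace ℝ (Fin d),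
          ρ ≤ ‖gradient ψ x‖ →
          (1 / 4) * (‖gradient (carlemanPhi lam ψ) x‖ ^ 2 + V₀ x) ≤ ‖ξ‖ ^ 2 →
          ‖ξ‖ ^ 2 ≤ 4 * (‖gradient (carlemanPhi lam ψ) x‖ ^ 2 + V₀ x) →
          C * lam ^ 3 * Real.exp (3 * lam * ψ x)
              ≤ poissonBracket (pRsymb lam ψ V₀) (pIsymb lam ψ) x ξ
            ∧ 0 < poissonBracket (pRsymb lam ψ V₀) (pIsymb lam ψ) x ξ := by
  refine ⟨1 + 5 * K ^ 2 * (K + 1) / ρ ^ 4, 4 * ρ ^ 4, le_add_of_nonneg_right (by positivity),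
    by positivity, fun lam hlam x ξ hρg _ hξ => ?_⟩
  have hlam0 : 0 < lam := lt_of_lt_of_le (by positivity) hlam
  have hgψ : ‖gradient ψ x‖ ≤ K := by
    simpa only [norm_gradient, norm_iteratedFDeriv_one] using hψ_d1 x
  have hD2ψ : ‖fderiv ℝ (fderiv ℝ ψ) x‖ ≤ K := by
    simpa only [← norm_iteratedFDeriv_fderiv (n := 1), norm_iteratedFDeriv_one] using hψ_d2 x
  have key := four_mul_pow_le_poissonBracket_pRsymb_pIsymb hψ_smooth
    (hV_smooth.differentiable one_ne_zero x) hρ hlam (hψ_nonneg x) hgψ hρg hD2ψ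
    ((le_abs_self _).trans (hV_bdd x)) (hV_d1 x) hξ
  have hexp : 4 * ρ ^ 4 * lam ^ 3 * exp (3 * lam * ψ x)
      = 4 * ρ ^ 4 * (lam * exp (lam * ψ x)) ^ 3 := by
    rw [mul_pow, ← exp_nat_mul]
    ring_nf
  rw [hexp]
  exact ⟨key, (by positivity : (0 : ℝ) < _).trans_le key⟩

theorem carleman_symbol_subellipticity
    (d : ℕ) (hd : 1 ≤ d) (K ρ : ℝ) (hK : 0 < K) (hρ : 0 < ρ)
    (ψ V₀ : EuclideanSpace ℝ (Fin d) → ℝ)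
    (hψ_smooth : ContDiff ℝ 2 ψ) (hψ_nonneg : ∀ x, 0 ≤ ψ x)
    -- |∂^α ψ| ≤ K for all 1 ≤ |α| ≤ 2:
    (hψ_d1 : ∀ x, ‖iteratedFDeriv ℝ 1 ψ x‖ ≤ K)
    (hψ_d2 : ∀ x, ‖iteratedFDeriv ℝ 2 ψ x‖ ≤ K)
    (hV_smooth : ContDiff ℝ 1 V₀)
    (hV_bdd : ∀ x, |V₀ x| ≤ K) (hV_d1 : ∀ x, ‖gradient V₀ x‖ ≤ K) :
    ∃ lam₀ C : ℝ, 1 ≤ lam₀ ∧ 0 < C ∧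
      ∀ lam : ℝ, lam₀ ≤ lam →
        ∀ x ξ : EuclideanSpace ℝ (Fin d),
          ρ ≤ ‖gradient ψ x‖ →
          (1 / 4) * (‖gradient (carlemanPhi lam ψ) x‖ ^ 2 + V₀ x) ≤ ‖ξ‖ ^ 2 →
          ‖ξ‖ ^ 2 ≤ 4 * (‖gradient (carlemanPhi lam ψ) x‖ ^ 2 + V₀ x) →
          C * lam ^ 3 * Real.exp (3 * lam * ψ x)
              ≤ poissonBracket (pRsymb lam ψ V₀) (pIsymb lam ψ) x ξ
            ∧ 0 < poissonBracket (pRsymb lam ψ V₀) (pIsymb lam ψ) x ξ :=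
  carleman_symbol_subellipticity_general d K ρ hK hρ ψ V₀ hψ_smooth hψ_nonneg hψ_d1 hψ_d2 hV_smooth
    hV_bdd hV_d1
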